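/- arXiv:math/9811047 — 2 statements merged into one kernel-verified Lean document; each statement's English description precedes it below -/
import Mathlib

section
/- Let R be an integral domain, n ≥ 1, and σ ∈ R a root of unity of exact order ℓ where ℓ divides 2n and (ℓ divides n if n is odd). Then (∑_{r=0}^{n-1} σ^{r²})·(∑_{s=0}^{n-1} σ^{-s²}) equals n²/ℓ if ℓ is odd, 2n²/ℓ if 4 divides ℓ, and 0 if ℓ is even and ℓ/2 is odd. -/
open scoped Classical

open Finset

lemma shift_sum {M : Type*} [AddCommGroup M] (n : ℕ) (F : ℕ → M)
    (hF : ∀ r, F (r + n) = F r) (s : ℕ) :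
    ∑ r ∈ range n, F r = ∑ r ∈ range n, F (r + s) := by
  induction s with
  | zero => simp
  | succ s ih =>
    rw [ih]
    have h0 : F (n + s) = F (0 + s) := by
      rw [Nat.zero_add, Nat.add_comm n s, hF]
    have h1 := (Finset.sum_range_succ (fun r => F (r + s)) n).symm.trans
      (Finset.sum_range_succ' (fun r => F (r + s)) n)
    rw [h0] at h1
    have h2 : ∑ r ∈ range n, F (r + s) = ∑ r ∈ range n, F (r + 1 + s) :=
      add_right_cancel h1
    rw [h2]
    apply Finset.sum_congr rfl
    intro r _
    congr 1
    omega

lemma sum_mult {M : Type*} [AddCommMonoid M] (F : ℕ → M) (d n : ℕ) (hd : 0 < d) (hdn : d ∣ n) :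
    ∑ t ∈ (range n).filter (d ∣ ·), F t = ∑ k ∈ range (n / d), F (d * k) := by
  refine Finset.sum_nbij' (fun t => t / d) (fun k => d * k) ?_ ?_ ?_ ?_ ?_
  · intro t ht
    simp only [mem_filter, mem_range] at ht
    simp only [mem_range]
    exact Nat.div_lt_div_of_lt_of_dvd hdn ht.1
  · intro k hk
    simp only [mem_range] at hk
    simp only [mem_filter, mem_range]
    have := (Nat.lt_div_iff_mul_lt' hdn k).mp hk
    exact ⟨by omega, Dvd.intro k rfl⟩
  · intro t ht
    simp only [mem_filter, mem_range] at ht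
    exact Nat.mul_div_cancel' ht.2
  · intro k hk
    exact Nat.mul_div_cancel_left k hd
  · intro t ht
    simp only [mem_filter, mem_range] at ht
    rw [Nat.mul_div_cancel' ht.2]

lemma geom_aux {R : Type} [CommRing R] [IsDomain R] (x : R) (n : ℕ) (hx : x ^ n = 1) :
    ∑ s ∈ range n, x ^ s = if x = 1 then (n : R) else 0 := by
  split_ifs with h
  · simp [h]
  · have h1 := geom_sum_mul x n
    rw [hx, sub_self] at h1
    rcases mul_eq_zero.mp h1 with h2 | h2
    · exact h2
    · exact absurd (sub_eq_zero.mp h2) h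

/- Gauss-sum computation 5.3.1: for σ a unit of exact order ℓ in an integral
domain, with ℓ ∣ 2n (and ℓ ∣ n when n is odd),
(∑_{r<n} σ^{r²})·(∑_{s<n} σ^{-s²}) = n²/ℓ if ℓ odd, 2n²/ℓ if 4 ∣ ℓ, and 0
if ℓ is even with ℓ/2 odd. -/

theorem stmt_11 (R : Type) [CommRing R] [IsDomain R]
    (n : ℕ) (hn : 1 ≤ n) (σ : Rˣ) (ℓ : ℕ)
    (hord : orderOf σ = ℓ)
    (hdvd : ℓ ∣ 2 * n)
    (hodd : Odd n → ℓ ∣ n) :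
    (∑ r ∈ Finset.range n, ((σ : R)) ^ (r ^ 2)) *
      (∑ s ∈ Finset.range n, ((σ⁻¹ : Rˣ) : R) ^ (s ^ 2)) =
    if Odd ℓ then ((n ^ 2 / ℓ : ℕ) : R)
    else if 4 ∣ ℓ then ((2 * n ^ 2 / ℓ : ℕ) : R)
    else 0 := by
  have hl0 : 0 < ℓ := by
    rcases Nat.eq_zero_or_pos ℓ with h | h
    · subst h; rw [zero_dvd_iff] at hdvd; omega
    · exact h
  have hln2 : ℓ ∣ n ^ 2 := by
    rcases Nat.even_or_odd n with ⟨k, hk⟩ | ho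
    · exact hdvd.trans ⟨k, by subst hk; ring⟩
    · exact (hodd ho).trans ⟨n, sq n⟩
  have hpow1 : ∀ a : ℕ, ℓ ∣ a → (σ : R) ^ a = 1 := by
    intro a ha
    have h : σ ^ a = 1 := by rw [← orderOf_dvd_iff_pow_eq_one, hord]; exact ha
    rw [← Units.val_pow_eq_pow_val, h, Units.val_one]
  have hper : ∀ r, (σ : R) ^ ((r + n) ^ 2) = (σ : R) ^ (r ^ 2) := by
    intro r
    have he : (r + n) ^ 2 = r ^ 2 + (2 * n * r + n ^ 2) := by ring
    rw [he, pow_add, hpow1 _ (dvd_add (hdvd.mul_right r) hln2), mul_one]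
  rw [Finset.mul_sum]
  have step1 : ∀ s : ℕ, (∑ r ∈ Finset.range n, (σ : R) ^ (r ^ 2)) * ((σ⁻¹ : Rˣ) : R) ^ (s ^ 2)
      = ∑ t ∈ Finset.range n, (σ : R) ^ (t ^ 2 + 2 * t * s) := by
    intro s
    rw [shift_sum n (fun r => (σ : R) ^ (r ^ 2)) hper s, Finset.sum_mul]
    apply Finset.sum_congr rfl
    intro t _
    have he : (t + s) ^ 2 = (t ^ 2 + 2 * t * s) + s ^ 2 := by ring
    rw [he, pow_add, mul_assoc, ← mul_pow, Units.mul_inv, one_pow, mul_one]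
  rw [Finset.sum_congr rfl (fun s _ => step1 s), Finset.sum_comm]
  have step2 : ∀ t ∈ Finset.range n, (∑ s ∈ Finset.range n, (σ : R) ^ (t ^ 2 + 2 * t * s))
      = if ℓ ∣ 2 * t then (n : R) * (σ : R) ^ (t ^ 2) else 0 := by
    intro t _
    have h1 : ∀ s, (σ : R) ^ (t ^ 2 + 2 * t * s) = (σ : R) ^ (t ^ 2) * ((σ : R) ^ (2 * t)) ^ s := by
      intro s; rw [pow_add, ← pow_mul]
    rw [Finset.sum_congr rfl (fun s _ => h1 s), ← Finset.mul_sum,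
      geom_aux _ _ (by rw [← pow_mul]; exact hpow1 _ (hdvd.trans ⟨t, by ring⟩))]
    by_cases h : ℓ ∣ 2 * t
    · rw [if_pos h, if_pos (hpow1 _ h), mul_comm]
    · have hx : ¬ (σ : R) ^ (2 * t) = 1 := by
        intro hc
        apply h
        rw [← hord]
        apply orderOf_dvd_iff_pow_eq_one.mpr
        exact Units.ext (by rw [Units.val_pow_eq_pow_val]; simpa using hc)
      rw [if_neg h, if_neg hx, mul_zero]
  rw [Finset.sum_congr rfl step2, ← Finset.sum_filter]
  by_cases hol : Odd ℓ
  · rw [if_pos hol]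
    have hcop : Nat.Coprime ℓ 2 := by
      exact Nat.coprime_two_right.mpr hol
    have hln : ℓ ∣ n := hcop.dvd_of_dvd_mul_right (by rwa [mul_comm] at hdvd)
    have hfe : (range n).filter (fun t => ℓ ∣ 2 * t) = (range n).filter (ℓ ∣ ·) := by
      apply Finset.filter_congr
      intro t _
      constructor
      · intro h; exact hcop.dvd_of_dvd_mul_right (by rwa [mul_comm] at h)
      · intro h; exact h.mul_left 2
    rw [hfe, sum_mult _ ℓ n hl0 hln]
    have hone : ∀ k ∈ range (n / ℓ), (n : R) * (σ : R) ^ ((ℓ * k) ^ 2) = (n : R) := by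
      intro k _; rw [hpow1 _ ⟨ℓ * k ^ 2, by ring⟩, mul_one]
    rw [Finset.sum_congr rfl hone, Finset.sum_const, Finset.card_range, nsmul_eq_mul]
    obtain ⟨c, hc⟩ := hln
    have h1 : n ^ 2 = ℓ * (c * n) := by rw [hc]; ring
    rw [h1, Nat.mul_div_cancel_left _ hl0, hc, Nat.mul_div_cancel_left _ hl0]
    push_cast; ring
  · rw [if_neg hol]
    obtain ⟨m, hm⟩ : ∃ m, ℓ = 2 * m := by
      rcases Nat.even_or_odd ℓ with ⟨k, hk⟩ | ho
      · exact ⟨k, by omega⟩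
      · exact absurd ho hol
    have hm0 : 0 < m := by omega
    have hmn : m ∣ n := by
      obtain ⟨c, hc⟩ := hdvd
      refine ⟨c, ?_⟩
      have h2 : 2 * n = 2 * (m * c) := by rw [hc, hm]; ring
      omega
    have hfe : (range n).filter (fun t => ℓ ∣ 2 * t) = (range n).filter (m ∣ ·) := by
      apply Finset.filter_congr
      intro t _
      rw [hm]
      exact Nat.mul_dvd_mul_iff_left (by norm_num : 0 < 2)
    rw [hfe, sum_mult _ m n hm0 hmn]
    have hneg : (σ : R) ^ m = -1 := by
      have hsq : (σ : R) ^ m * (σ : R) ^ m = 1 := by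
        rw [← pow_add]; exact hpow1 _ ⟨1, by omega⟩
      rcases mul_self_eq_one_iff.mp hsq with h1 | h1
      · exfalso
        have h2 : σ ^ m = 1 := Units.ext (by rw [Units.val_pow_eq_pow_val]; simpa using h1)
        have h3 := orderOf_dvd_iff_pow_eq_one.mpr h2
        rw [hord] at h3
        have := Nat.le_of_dvd hm0 h3
        omega
      · exact h1
    have hterm : ∀ k : ℕ, (σ : R) ^ ((m * k) ^ 2) = (-1 : R) ^ (m * k) := by
      intro k
      have he : (m * k) ^ 2 = m * (m * k ^ 2) := by ring
      rw [he, pow_mul, hneg]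
      have hpar : Even (m * k ^ 2) ↔ Even (m * k) := by
        rw [Nat.even_mul, Nat.even_mul, Nat.even_pow]
        constructor <;> intro h <;> rcases h with h | h
        · exact Or.inl h
        · exact Or.inr h.1
        · exact Or.inl h
        · exact Or.inr ⟨h, by norm_num⟩
      rcases Nat.even_or_odd (m * k) with h | h
      · rw [h.neg_one_pow, (hpar.mpr h).neg_one_pow]
      · have h2 : Odd (m * k ^ 2) :=
          Nat.not_even_iff_odd.mp (fun he2 => (Nat.not_even_iff_odd.mpr h) (hpar.mp he2))
        rw [h.neg_one_pow, h2.neg_one_pow]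
    rw [Finset.sum_congr rfl (fun k _ => by rw [hterm k])]
    by_cases h4 : 4 ∣ ℓ
    · rw [if_pos h4]
      have hme : Even m := by
        obtain ⟨c, hc⟩ := h4
        exact ⟨c, by omega⟩
      have hone : ∀ k ∈ range (n / m), (n : R) * (-1 : R) ^ (m * k) = (n : R) := by
        intro k _; rw [(hme.mul_right k).neg_one_pow, mul_one]
      rw [Finset.sum_congr rfl hone, Finset.sum_const, Finset.card_range, nsmul_eq_mul]
      obtain ⟨c, hc⟩ := hmn
      have h1 : 2 * n ^ 2 = ℓ * (c * n) := by rw [hc, hm]; ring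
      rw [h1, Nat.mul_div_cancel_left _ hl0, hc, Nat.mul_div_cancel_left _ hm0]
      push_cast; ring
    · rw [if_neg h4]
      have hmo : Odd m := by
        rcases Nat.even_or_odd m with ⟨c, hc⟩ | ho
        · exact absurd ⟨c, by omega⟩ h4
        · exact ho
      have hne : Even n := by
        rcases Nat.even_or_odd n with he | ho
        · exact he
        · exfalso
          have h2d : (2:ℕ) ∣ ℓ := ⟨m, hm⟩
          obtain ⟨c, hc⟩ := h2d.trans (hodd ho)
          rw [Nat.odd_iff] at ho
          omega
      have hnm : Even (n / m) := by
        obtain ⟨c, hc⟩ := hmn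
        rw [hc, Nat.mul_div_cancel_left _ hm0]
        rcases Nat.even_or_odd c with he | ho
        · exact he
        · exfalso
          have h2 : Odd (m * c) := hmo.mul ho
          rw [← hc] at h2
          exact (Nat.not_even_iff_odd.mpr h2) hne
      have hpw : ∀ k ∈ range (n / m), (n : R) * (-1 : R) ^ (m * k) = (n : R) * (-1 : R) ^ k := by
        intro k _
        rcases Nat.even_or_odd k with he | ho
        · rw [(he.mul_left m).neg_one_pow, he.neg_one_pow]
        · rw [(hmo.mul ho).neg_one_pow, ho.neg_one_pow]
      rw [Finset.sum_congr rfl hpw, ← Finset.mul_sum, neg_one_geom_sum, if_pos hnm, mul_zero]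
end

section
/- With Z as in the homological field theory and k the order of the image of H_{n+1}(X;G) in H_{n+1}(X, Y₀∪Y₁; G), the induced homomorphism satisfies Z_X(y) = k · ∑ { y₁ ∈ H_n(Y₁;G) : i(y₁) = i(y) in H_n(X;G) }, where i denotes the maps induced by inclusion. -/
open Finset

/- Explicit form of the induced homomorphism (3.1.1): with the exact sequence
H_{n+1}(X) →f H_{n+1}(X,Y₀∪Y₁) →d H_n(Y₀) ⊕ H_n(Y₁) →(i0+i1) H_n(X),
and k the order of the image of f, one has
Z_X(y) = ∑_{∂₀x = -y} ∂₁x = k·∑{y₁ ∈ H_n(Y₁) : i₁(y₁) = i₀(y)}. -/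

theorem stmt_15 (R : Type) [CommRing R]
    (HX1 C A0 A1 HX : Type)
    [AddCommGroup HX1] [AddCommGroup C] [AddCommGroup A0]
    [AddCommGroup A1] [AddCommGroup HX]
    [Fintype C] [Fintype A1]
    [DecidableEq A0] [DecidableEq A1] [DecidableEq HX]
    (f : HX1 →+ C) (d : C →+ A0 × A1) (i0 : A0 →+ HX) (i1 : A1 →+ HX)
    (hexact₁ : ∀ x : C, (∃ w : HX1, f w = x) ↔ d x = 0)
    (hexact₂ : ∀ p : A0 × A1, (∃ x : C, d x = p) ↔ i0 p.1 + i1 p.2 = 0)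
    (k : ℕ) (hk : k = Nat.card (Set.range f)) :
    ∀ y : A0,
      (∑ x ∈ univ.filter (fun x : C => (d x).1 = -y),
          Finsupp.single ((d x).2) (1 : R)) =
      k • ∑ y1 ∈ univ.filter (fun y1 : A1 => i1 y1 = i0 y),
          Finsupp.single y1 (1 : R) := by
  intro y
  classical
  -- the kernel of d has exactly k elements
  have hker : (univ.filter (fun x : C => d x = 0)).card = k := by
    have hset : Set.range f = {x : C | d x = 0} := by
      ext x
      simpa [Set.mem_range] using hexact₁ x
    rw [hk, hset]
    rw [Nat.card_eq_card_toFinset]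
    congr 1
    ext x
    simp
  -- fiber counting
  have hcard : ∀ a : A1,
      (univ.filter (fun x : C => d x = (-y, a))).card =
        if i1 a = i0 y then k else 0 := by
    intro a
    by_cases h : i1 a = i0 y
    · rw [if_pos h]
      obtain ⟨x0, hx0⟩ := (hexact₂ (-y, a)).mpr (by simp [h])
      rw [← hker]
      apply Finset.card_bij (fun x _ => x - x0)
      · intro x hx
        simp only [mem_filter, mem_univ, true_and] at hx ⊢
        rw [map_sub, hx, hx0, sub_self]
      · intro x hx x' hx' hxy
        exact sub_left_injective hxy
      · intro z hz
        simp only [mem_filter, mem_univ, true_and] at hz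
        refine ⟨z + x0, ?_, by abel⟩
        simp only [mem_filter, mem_univ, true_and]
        rw [map_add, hz, hx0, zero_add]
    · rw [if_neg h, Finset.card_eq_zero, Finset.filter_eq_empty_iff]
      intro x _
      intro hx
      have := (hexact₂ (-y, a)).mp ⟨x, hx⟩
      simp only [map_neg] at this
      exact h (by linear_combination (norm := abel) this)
  ext a
  rw [Finset.sum_apply']
  have hL : ∀ x : C, (Finsupp.single ((d x).2) (1 : R)) a =
      if (d x).2 = a then (1 : R) else 0 := fun x => Finsupp.single_apply
  rw [Finset.sum_congr rfl (fun x _ => hL x), Finset.sum_ite, Finset.sum_const,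
    Finset.sum_const_zero, add_zero, Finset.filter_filter]
  have hfe : univ.filter (fun x : C => (d x).1 = -y ∧ (d x).2 = a) =
      univ.filter (fun x : C => d x = (-y, a)) := by
    apply Finset.filter_congr
    intro x _
    simp [Prod.ext_iff]
  rw [hfe, hcard a]
  have hR : (∑ y1 ∈ univ.filter (fun y1 : A1 => i1 y1 = i0 y),
      Finsupp.single y1 (1 : R)) a = if i1 a = i0 y then (1 : R) else 0 := by
    rw [Finset.sum_apply']
    have : ∀ y1 : A1, (Finsupp.single y1 (1 : R)) a =
        if y1 = a then (1 : R) else 0 := fun y1 => Finsupp.single_apply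
    rw [Finset.sum_congr rfl (fun y1 _ => this y1), Finset.sum_ite_eq']
    simp
  rw [Finsupp.smul_apply, hR]
  split_ifs <;> simp
end
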